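/- If u_n → u weakly in L^p(Ω; ℝ^N) with 2 ≤ p < ∞ and |u_n|^{p-2} u_n → f weakly in L^{p/(p-1)}(Ω; ℝ^N), then ∫_Ω f·u dx ≤ liminf_{n→∞} ∫_Ω |u_n|^p dx. -/

import Mathlib

open MeasureTheory Filter
open scoped RealInnerProductSpace ENNReal

section Helpers

variable {α : Type*} [MeasurableSpace α] {μ : Measure α}
variable {V : Type*} [NormedAddCommGroup V] [InnerProductSpace ℝ V]

private lemma rpow_succ_aux {p : ℝ} (hp : 1 < p) (x : ℝ) (hx : 0 ≤ x) :
    x ^ (p - 2) * x = x ^ (p - 1) := by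
  rcases eq_or_lt_of_le hx with h | h
  · rw [← h, mul_zero, Real.zero_rpow (sub_ne_zero.mpr (ne_of_gt hp))]
  · calc x ^ (p - 2) * x = x ^ (p - 2) * x ^ (1:ℝ) := by rw [Real.rpow_one]
      _ = x ^ (p - 2 + 1) := (Real.rpow_add h _ _).symm
      _ = x ^ (p - 1) := by congr 1; ring

private lemma rpow_succ_aux' {p : ℝ} (hp : 1 < p) (x : ℝ) (hx : 0 ≤ x) :
    x ^ (p - 1) * x = x ^ p := by
  rcases eq_or_lt_of_le hx with h | h
  · rw [← h, mul_zero, Real.zero_rpow (by positivity)]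
  · calc x ^ (p - 1) * x = x ^ (p - 1) * x ^ (1:ℝ) := by rw [Real.rpow_one]
      _ = x ^ (p - 1 + 1) := (Real.rpow_add h _ _).symm
      _ = x ^ p := by congr 1; ring

private lemma conj_div_add {p : ℝ} (hp : 1 < p) :
    1 / (1 : ℝ≥0∞) = 1 / ENNReal.ofReal (p / (p - 1)) + 1 / ENNReal.ofReal p := by
  have hp0 : 0 < p := by linarith
  have hp1 : 0 < p - 1 := by linarith
  have h1 : 0 < p / (p - 1) := by positivity
  rw [one_div, one_div, one_div, inv_one,
    ← ENNReal.ofReal_inv_of_pos h1, ← ENNReal.ofReal_inv_of_pos hp0,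
    ← ENNReal.ofReal_add (by positivity) (by positivity),
    show (p / (p - 1))⁻¹ + p⁻¹ = 1 by field_simp; ring]
  exact ENNReal.ofReal_one.symm

private lemma holder_inner {p : ℝ} (hp : 1 < p) {g1 g2 : α → V}
    (h1 : MemLp g1 (ENNReal.ofReal (p / (p - 1))) μ)
    (h2 : MemLp g2 (ENNReal.ofReal p) μ) :
    Integrable (fun x => ⟪g1 x, g2 x⟫) μ := by
  have hH : eLpNorm (fun x => ⟪g1 x, g2 x⟫) 1 μ ≤
      eLpNorm g1 (ENNReal.ofReal (p / (p - 1))) μ * eLpNorm g2 (ENNReal.ofReal p) μ :=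
    by
      haveI : ENNReal.HolderTriple (ENNReal.ofReal (p / (p - 1))) (ENNReal.ofReal p) 1 :=
        ⟨by simpa [one_div] using (conj_div_add hp).symm⟩
      simpa using eLpNorm_le_eLpNorm_mul_eLpNorm_of_nnnorm h1.1 h2.1 (fun a b => ⟪a, b⟫) 1
        (Eventually.of_forall fun x => by simpa using nnnorm_inner_le_nnnorm (g1 x) (g2 x))
  have hm : MemLp (fun x => ⟪g1 x, g2 x⟫) 1 μ :=
    ⟨h1.1.inner h2.1, hH.trans_lt (ENNReal.mul_lt_top h1.2 h2.2)⟩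
  exact memLp_one_iff_integrable.mp hm

private lemma holder_inner_bound {p : ℝ} (hp : 1 < p) {g1 g2 : α → V}
    (h1 : MemLp g1 (ENNReal.ofReal (p / (p - 1))) μ)
    (h2 : MemLp g2 (ENNReal.ofReal p) μ) :
    |∫ x, ⟪g1 x, g2 x⟫ ∂μ| ≤
      (eLpNorm g1 (ENNReal.ofReal (p / (p - 1))) μ).toReal *
        (eLpNorm g2 (ENNReal.ofReal p) μ).toReal := by
  have hint := holder_inner hp h1 h2
  have hH : eLpNorm (fun x => ⟪g1 x, g2 x⟫) 1 μ ≤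
      eLpNorm g1 (ENNReal.ofReal (p / (p - 1))) μ * eLpNorm g2 (ENNReal.ofReal p) μ :=
    by
      haveI : ENNReal.HolderTriple (ENNReal.ofReal (p / (p - 1))) (ENNReal.ofReal p) 1 :=
        ⟨by simpa [one_div] using (conj_div_add hp).symm⟩
      simpa using eLpNorm_le_eLpNorm_mul_eLpNorm_of_nnnorm h1.1 h2.1 (fun a b => ⟪a, b⟫) 1
        (Eventually.of_forall fun x => by simpa using nnnorm_inner_le_nnnorm (g1 x) (g2 x))
  have h0 : |∫ x, ⟪g1 x, g2 x⟫ ∂μ| ≤ ∫ x, ‖⟪g1 x, g2 x⟫‖ ∂μ := by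
    rw [← Real.norm_eq_abs]
    exact norm_integral_le_integral_norm _
  have heq : ENNReal.ofReal (∫ x, ‖⟪g1 x, g2 x⟫‖ ∂μ) =
      eLpNorm (fun x => ⟪g1 x, g2 x⟫) 1 μ := by
    rw [ofReal_integral_norm_eq_lintegral_enorm hint, eLpNorm_one_eq_lintegral_enorm]
  have hfin : eLpNorm g1 (ENNReal.ofReal (p / (p - 1))) μ *
      eLpNorm g2 (ENNReal.ofReal p) μ ≠ ⊤ := (ENNReal.mul_lt_top h1.2 h2.2).ne
  have h2' : ∫ x, ‖⟪g1 x, g2 x⟫‖ ∂μ ≤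
      ((eLpNorm g1 (ENNReal.ofReal (p / (p - 1))) μ) *
        (eLpNorm g2 (ENNReal.ofReal p) μ)).toReal := by
    rw [← ENNReal.toReal_ofReal (show 0 ≤ ∫ x, ‖⟪g1 x, g2 x⟫‖ ∂μ from
      integral_nonneg fun x => norm_nonneg _), heq]
    exact ENNReal.toReal_mono hfin hH
  rw [ENNReal.toReal_mul] at h2'
  exact h0.trans h2'

private lemma memℒp_dual {p : ℝ} (hp : 2 ≤ p) {g : α → V}
    (hg : MemLp g (ENNReal.ofReal p) μ) :
    MemLp (fun x => (‖g x‖ ^ (p - 2)) • g x) (ENNReal.ofReal (p / (p - 1))) μ := by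
  have hp1 : 1 < p := by linarith
  have hsm : AEStronglyMeasurable (fun x => (‖g x‖ ^ (p - 2)) • g x) μ :=
    ((hg.1.norm.aemeasurable.pow_const (p - 2)).aestronglyMeasurable).smul hg.1
  refine ⟨hsm, ?_⟩
  have hnorm : ∀ᵐ x ∂μ, ‖(‖g x‖ ^ (p - 2)) • g x‖ = ‖(fun y => ‖g y‖ ^ (p - 1)) x‖ := by
    refine Eventually.of_forall fun x => ?_
    rw [norm_smul, Real.norm_eq_abs, abs_of_nonneg (Real.rpow_nonneg (norm_nonneg _) _),
      rpow_succ_aux hp1 _ (norm_nonneg _), Real.norm_eq_abs,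
      abs_of_nonneg (Real.rpow_nonneg (norm_nonneg _) _)]
  rw [eLpNorm_congr_norm_ae hnorm,
    eLpNorm_norm_rpow g (show (0:ℝ) < p - 1 by linarith),
    show ENNReal.ofReal (p / (p - 1)) * ENNReal.ofReal (p - 1) = ENNReal.ofReal p by
      rw [← ENNReal.ofReal_mul (div_nonneg (by linarith) (by linarith))]
      congr 1
      exact div_mul_cancel₀ p (sub_ne_zero.mpr (ne_of_gt hp1))]
  exact ENNReal.rpow_lt_top_of_nonneg (by linarith) hg.2.ne

private lemma inner_point_ineq {p : ℝ} (hp : 2 ≤ p) (a b : V) :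
    ⟪(‖a‖ ^ (p - 2)) • a, b⟫ + ⟪(‖b‖ ^ (p - 2)) • b, a⟫ ≤ ‖a‖ ^ p + ‖b‖ ^ p := by
  have hp1 : 1 < p := by linarith
  set x := ‖a‖ with hxdef
  set y := ‖b‖ with hydef
  have hx : 0 ≤ x := norm_nonneg a
  have hy : 0 ≤ y := norm_nonneg b
  have hxp : 0 ≤ x ^ (p - 2) := Real.rpow_nonneg hx _
  have hyp : 0 ≤ y ^ (p - 2) := Real.rpow_nonneg hy _
  rw [real_inner_smul_left, real_inner_smul_left]
  have h1 : ⟪a, b⟫ ≤ x * y := real_inner_le_norm a b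
  have h2 : ⟪b, a⟫ ≤ y * x := real_inner_le_norm b a
  have key : 0 ≤ (x ^ (p - 1) - y ^ (p - 1)) * (x - y) := by
    rcases le_total x y with h | h
    · have h' : 0 ≤ (y ^ (p - 1) - x ^ (p - 1)) * (y - x) := by
        have := Real.rpow_le_rpow hx h (by linarith : (0:ℝ) ≤ p - 1)
        exact mul_nonneg (by linarith) (by linarith)
      nlinarith [h']
    · apply mul_nonneg
      · have := Real.rpow_le_rpow hy h (by linarith : (0:ℝ) ≤ p - 1)
        linarith
      · linarith
  have key' : 0 ≤ x ^ (p-1) * x - x ^ (p-1) * y - y ^ (p-1) * x + y ^ (p-1) * y := by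
    linear_combination key
  have e1 : x ^ (p - 2) * x = x ^ (p - 1) := rpow_succ_aux hp1 x hx
  have e2 : y ^ (p - 2) * y = y ^ (p - 1) := rpow_succ_aux hp1 y hy
  have e3 : x ^ (p - 1) * x = x ^ p := rpow_succ_aux' hp1 x hx
  have e4 : y ^ (p - 1) * y = y ^ p := rpow_succ_aux' hp1 y hy
  have c1 : x ^ (p - 2) * ⟪a, b⟫ ≤ x ^ (p - 1) * y := by
    calc x ^ (p - 2) * ⟪a, b⟫ ≤ x ^ (p - 2) * (x * y) := mul_le_mul_of_nonneg_left h1 hxp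
      _ = x ^ (p - 1) * y := by rw [← mul_assoc, e1]
  have c2 : y ^ (p - 2) * ⟪b, a⟫ ≤ y ^ (p - 1) * x := by
    calc y ^ (p - 2) * ⟪b, a⟫ ≤ y ^ (p - 2) * (y * x) := mul_le_mul_of_nonneg_left h2 hyp
      _ = y ^ (p - 1) * x := by rw [← mul_assoc, e2]
  linarith

private lemma scalar_bound {p C v : ℝ} (hp : 1 < p) (hv : 0 ≤ v) (hC : 0 ≤ C)
    (h : v ≤ C * v ^ p⁻¹) : v ≤ max 1 (C ^ (p / (p - 1))) := by
  rcases le_or_gt v 1 with h1 | h1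
  · exact le_max_of_le_left h1
  · have hv0 : 0 < v := by linarith
    have hpos : 0 < v ^ p⁻¹ := Real.rpow_pos_of_pos hv0 _
    have hkey : v ^ (1 - p⁻¹) ≤ C := by
      have hdiv : v / v ^ p⁻¹ ≤ C := (div_le_iff₀ hpos).mpr (by linarith)
      have heq : v ^ (1 - p⁻¹) = v / v ^ p⁻¹ := by
        rw [Real.rpow_sub hv0, Real.rpow_one]
      rw [heq]; exact hdiv
    have hpne : p ≠ 0 := by linarith
    have hp1ne : p - 1 ≠ 0 := sub_ne_zero.mpr (ne_of_gt hp)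
    have hexp : (1 - p⁻¹) * (p / (p - 1)) = 1 := by field_simp
    have hvv : v = (v ^ (1 - p⁻¹)) ^ (p / (p - 1)) := by
      rw [← Real.rpow_mul hv0.le, hexp, Real.rpow_one]
    calc v = (v ^ (1 - p⁻¹)) ^ (p / (p - 1)) := hvv
      _ ≤ C ^ (p / (p - 1)) :=
        Real.rpow_le_rpow (Real.rpow_nonneg hv0.le _) hkey (div_nonneg (by linarith) (by linarith))
      _ ≤ max 1 (C ^ (p / (p - 1))) := le_max_right _ _

end Helpers

/-- If `u_n → u` weakly in `L^p` (`2 ≤ p < ∞`) and `|u_n|^{p-2} u_n → f` weakly in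
`L^{p/(p-1)}`, then `∫ f·u ≤ liminf ∫ |u_n|^p`. -/
theorem weak_limit_duality_liminf
    (n N : ℕ) (Ω : Set (EuclideanSpace ℝ (Fin n)))
    (hΩm : MeasurableSet Ω) (hΩfin : volume Ω < ⊤)
    (p : ℝ) (hp : 2 ≤ p)
    (u : ℕ → EuclideanSpace ℝ (Fin n) → EuclideanSpace ℝ (Fin N))
    (ulim : EuclideanSpace ℝ (Fin n) → EuclideanSpace ℝ (Fin N))
    (f : EuclideanSpace ℝ (Fin n) → EuclideanSpace ℝ (Fin N))
    (hu : ∀ k, MemLp (u k) (ENNReal.ofReal p) (volume.restrict Ω))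
    (hulim : MemLp ulim (ENNReal.ofReal p) (volume.restrict Ω))
    (hf : MemLp f (ENNReal.ofReal (p / (p - 1))) (volume.restrict Ω))
    -- `u k → ulim` weakly in `L^p(Ω; ℝ^N)`
    (huw : ∀ g : EuclideanSpace ℝ (Fin n) → EuclideanSpace ℝ (Fin N),
      MemLp g (ENNReal.ofReal (p / (p - 1))) (volume.restrict Ω) →
      Tendsto (fun k => ∫ x in Ω, ⟪u k x, g x⟫) atTop
        (nhds (∫ x in Ω, ⟪ulim x, g x⟫)))
    -- `|u k|^(p-2) u k → f` weakly in `L^{p/(p-1)}(Ω; ℝ^N)`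
    (hfw : ∀ g : EuclideanSpace ℝ (Fin n) → EuclideanSpace ℝ (Fin N),
      MemLp g (ENNReal.ofReal p) (volume.restrict Ω) →
      Tendsto (fun k => ∫ x in Ω, ⟪(‖u k x‖ ^ (p - 2)) • u k x, g x⟫) atTop
        (nhds (∫ x in Ω, ⟪f x, g x⟫))) :
    ∫ x in Ω, ⟪f x, ulim x⟫ ≤
      Filter.liminf (fun k => ∫ x in Ω, ‖u k x‖ ^ p) atTop := by
  have hp1 : 1 < p := by linarith
  have hp0 : 0 < p := by linarith
  set μ : Measure (EuclideanSpace ℝ (Fin n)) := volume.restrict Ω with hμdef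
  set P : ℝ≥0∞ := ENNReal.ofReal p with hPdef
  set Q : ℝ≥0∞ := ENNReal.ofReal (p / (p - 1)) with hQdef
  set A : EuclideanSpace ℝ (Fin n) → EuclideanSpace ℝ (Fin N) :=
    fun x => (‖ulim x‖ ^ (p - 2)) • ulim x with hAdef
  have hA : MemLp A Q μ := memℒp_dual hp hulim
  have hAk : ∀ k, MemLp (fun x => (‖u k x‖ ^ (p - 2)) • u k x) Q μ :=
    fun k => memℒp_dual hp (hu k)
  have hinner_self : ∀ (a : EuclideanSpace ℝ (Fin N)),
      ⟪(‖a‖ ^ (p - 2)) • a, a⟫ = ‖a‖ ^ p := by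
    intro a
    rw [real_inner_smul_left, real_inner_self_eq_norm_mul_norm, ← mul_assoc,
      rpow_succ_aux hp1 _ (norm_nonneg a), rpow_succ_aux' hp1 _ (norm_nonneg a)]
  haveI : Fact (1 ≤ P) :=
    ⟨by rw [hPdef, ← ENNReal.ofReal_one]; exact ENNReal.ofReal_le_ofReal (by linarith)⟩
  -- integrability facts
  have hUlimP : Integrable (fun x => ‖ulim x‖ ^ p) μ := by
    have := hulim.integrable_norm_rpow
      (ne_of_gt (ENNReal.ofReal_pos.mpr hp0)) ENNReal.ofReal_ne_top
    simpa [hPdef, ENNReal.toReal_ofReal hp0.le] using this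
  have hUkP : ∀ k, Integrable (fun x => ‖u k x‖ ^ p) μ := by
    intro k
    have := (hu k).integrable_norm_rpow
      (ne_of_gt (ENNReal.ofReal_pos.mpr hp0)) ENNReal.ofReal_ne_top
    simpa [hPdef, ENNReal.toReal_ofReal hp0.le] using this
  -- Step 1: uniform bound on `∫ ‖u k‖^p` via Banach–Steinhaus
  have hint : ∀ k (g : EuclideanSpace ℝ (Fin n) → EuclideanSpace ℝ (Fin N)),
      MemLp g P μ → Integrable (fun x => ⟪(‖u k x‖ ^ (p - 2)) • u k x, g x⟫) μ :=
    fun k g hg => holder_inner hp1 (hAk k) hg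
  let T : ℕ → (Lp (EuclideanSpace ℝ (Fin N)) P μ) →ₗ[ℝ] ℝ := fun k =>
    { toFun := fun g => ∫ x, ⟪(‖u k x‖ ^ (p - 2)) • u k x, g x⟫ ∂μ
      map_add' := by
        intro g h
        rw [← integral_add (hint k g (Lp.memLp g)) (hint k h (Lp.memLp h))]
        refine integral_congr_ae ?_
        filter_upwards [Lp.coeFn_add g h] with x hx
        rw [hx]
        simp [inner_add_right]
      map_smul' := by
        intro c g
        simp only [RingHom.id_apply]
        rw [← integral_smul]
        refine integral_congr_ae ?_
        filter_upwards [Lp.coeFn_smul c g] with x hx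
        rw [hx]
        exact real_inner_smul_right _ _ _ }
  let Φ : ℕ → (Lp (EuclideanSpace ℝ (Fin N)) P μ) →L[ℝ] ℝ := fun k =>
    (T k).mkContinuous
      ((eLpNorm (fun x => (‖u k x‖ ^ (p - 2)) • u k x) Q μ).toReal) (by
        intro g
        have hb := holder_inner_bound hp1 (hAk k) (Lp.memLp g)
        rw [Lp.norm_def]
        rw [Real.norm_eq_abs]
        exact hb)
  have hptwise : ∀ g : Lp (EuclideanSpace ℝ (Fin N)) P μ, ∃ C, ∀ k, ‖Φ k g‖ ≤ C := by
    intro g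
    have ht : Tendsto (fun k => Φ k g) atTop (nhds (∫ x, ⟪f x, g x⟫ ∂μ)) :=
      hfw g (Lp.memLp g)
    have hb : BddAbove (Set.range fun k => ‖Φ k g‖) := ht.norm.bddAbove_range
    obtain ⟨C, hC⟩ := hb
    exact ⟨C, fun k => hC ⟨k, rfl⟩⟩
  obtain ⟨C, hC⟩ := banach_steinhaus hptwise
  set C' : ℝ := max C 0 with hC'def
  have hC'0 : 0 ≤ C' := le_max_right _ _
  have hvC : ∀ k, (∫ x, ‖u k x‖ ^ p ∂μ) ≤ C' * (∫ x, ‖u k x‖ ^ p ∂μ) ^ p⁻¹ := by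
    intro k
    have h1 : Φ k ((hu k).toLp (u k)) = ∫ x, ‖u k x‖ ^ p ∂μ := by
      have hcoe := (hu k).coeFn_toLp
      calc Φ k ((hu k).toLp (u k))
          = ∫ x, ⟪(‖u k x‖ ^ (p - 2)) • u k x, ((hu k).toLp (u k) : _) x⟫ ∂μ := rfl
        _ = ∫ x, ⟪(‖u k x‖ ^ (p - 2)) • u k x, u k x⟫ ∂μ := by
            refine integral_congr_ae ?_
            filter_upwards [hcoe] with x hx
            rw [hx]
        _ = ∫ x, ‖u k x‖ ^ p ∂μ := by
            refine integral_congr_ae (Eventually.of_forall fun x => ?_)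
            exact hinner_self (u k x)
    have h2 : ‖Φ k ((hu k).toLp (u k))‖ ≤ C' * ‖(hu k).toLp (u k)‖ :=
      ((Φ k).le_opNorm _).trans
        (mul_le_mul_of_nonneg_right ((hC k).trans (le_max_left _ _)) (norm_nonneg _))
    have h3 : ‖(hu k).toLp (u k)‖ = (∫ x, ‖u k x‖ ^ p ∂μ) ^ p⁻¹ := by
      rw [Lp.norm_toLp,
        (hu k).eLpNorm_eq_integral_rpow_norm (ne_of_gt (ENNReal.ofReal_pos.mpr hp0))
          ENNReal.ofReal_ne_top,
        ENNReal.toReal_ofReal (by positivity)]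
      simp [hPdef, ENNReal.toReal_ofReal hp0.le]
    calc (∫ x, ‖u k x‖ ^ p ∂μ) = Φ k ((hu k).toLp (u k)) := h1.symm
      _ ≤ ‖Φ k ((hu k).toLp (u k))‖ := le_abs_self _
      _ ≤ C' * ‖(hu k).toLp (u k)‖ := h2
      _ = C' * (∫ x, ‖u k x‖ ^ p ∂μ) ^ p⁻¹ := by rw [h3]
  have hVbdd : ∀ k, (∫ x, ‖u k x‖ ^ p ∂μ) ≤ max 1 (C' ^ (p / (p - 1))) := fun k =>
    scalar_bound hp1 (integral_nonneg fun x => Real.rpow_nonneg (norm_nonneg _) _)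
      hC'0 (hvC k)
  -- Step 2: key pointwise/integral inequality from monotonicity
  have key : ∀ k,
      (∫ x, ⟪(‖u k x‖ ^ (p - 2)) • u k x, ulim x⟫ ∂μ) + (∫ x, ⟪u k x, A x⟫ ∂μ)
        - (∫ x, ‖ulim x‖ ^ p ∂μ) ≤ ∫ x, ‖u k x‖ ^ p ∂μ := by
    intro k
    have i1 : Integrable (fun x => ⟪(‖u k x‖ ^ (p - 2)) • u k x, ulim x⟫) μ :=
      holder_inner hp1 (hAk k) hulim
    have i2 : Integrable (fun x => ⟪u k x, A x⟫) μ :=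
      (holder_inner hp1 hA (hu k)).congr
        (Eventually.of_forall fun x => real_inner_comm _ _)
    have i12 : Integrable
        (fun x => ⟪(‖u k x‖ ^ (p - 2)) • u k x, ulim x⟫ + ⟪u k x, A x⟫) μ := i1.add i2
    have i123 : Integrable
        (fun x => ⟪(‖u k x‖ ^ (p - 2)) • u k x, ulim x⟫ + ⟪u k x, A x⟫ - ‖ulim x‖ ^ p) μ :=
      i12.sub hUlimP
    have hrw : (∫ x, ⟪(‖u k x‖ ^ (p - 2)) • u k x, ulim x⟫ ∂μ) + (∫ x, ⟪u k x, A x⟫ ∂μ)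
        - (∫ x, ‖ulim x‖ ^ p ∂μ)
        = ∫ x, (⟪(‖u k x‖ ^ (p - 2)) • u k x, ulim x⟫ + ⟪u k x, A x⟫ - ‖ulim x‖ ^ p) ∂μ := by
      rw [integral_sub i12 hUlimP, integral_add i1 i2]
    rw [hrw]
    refine integral_mono i123 (hUkP k) ?_
    intro x
    have hpt := inner_point_ineq hp (u k x) (ulim x)
    have hAx : ⟪u k x, A x⟫ = ⟪(‖ulim x‖ ^ (p - 2)) • ulim x, u k x⟫ :=
      real_inner_comm _ _
    simp only []
    rw [hAx]
    linarith
  -- Step 3: convergence of the lower bound sequence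
  have h1 := hfw ulim hulim
  have h2 := huw A hA
  have hAul : (∫ x, ⟪ulim x, A x⟫ ∂μ) = ∫ x, ‖ulim x‖ ^ p ∂μ := by
    refine integral_congr_ae (Eventually.of_forall fun x => ?_)
    show ⟪ulim x, A x⟫ = ‖ulim x‖ ^ p
    rw [real_inner_comm (A x) (ulim x)]
    exact hinner_self (ulim x)
  have hc : Tendsto (fun k =>
      (∫ x, ⟪(‖u k x‖ ^ (p - 2)) • u k x, ulim x⟫ ∂μ) + (∫ x, ⟪u k x, A x⟫ ∂μ)
        - (∫ x, ‖ulim x‖ ^ p ∂μ)) atTop (nhds (∫ x, ⟪f x, ulim x⟫ ∂μ)) := by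
    have ht := (h1.add h2).sub
      (tendsto_const_nhds (x := ∫ x, ‖ulim x‖ ^ p ∂μ) (f := atTop))
    rw [hAul] at ht
    simpa using ht
  -- Step 4: pass to the liminf
  have hlim := hc.liminf_eq
  rw [show (∫ x in Ω, ⟪f x, ulim x⟫) = ∫ x, ⟪f x, ulim x⟫ ∂μ from rfl, ← hlim]
  refine liminf_le_liminf (Eventually.of_forall key) hc.isBoundedUnder_ge ?_
  exact (isBoundedUnder_of ⟨max 1 (C' ^ (p / (p - 1))), hVbdd⟩).isCoboundedUnder_ge
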